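/- For every real x > 0 with x ≠ 1 and every real p with 0 < p < 1, one has W_p(x,1) ≤ ((√x + 1)/2)² = K(√x)·√x ≤ K(√x)·L(x,1), where K is the Kantorovich constant. -/

import Mathlib

/-!
Write x = e^{4u}. Then x^r - 1 = 2 e^{2ru} sinh (2ru) and √x + 1 = 2 e^u cosh u, so after cancelling
the exponentials the first inequality reads 4p(1-p) sinh² u ≤ sinh (2pu) sinh (2(1-p)u). With
q = 2p - 1 the right side is sinh² u - sinh² (qu), and sinh² (qu) ≤ q² sinh² u because sinh is
convex on [0, ∞) and vanishes at 0. The bound √x ≤ L(x,1) is t ≤ sinh t (for t > 0, reversed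
for t < 0) with x = e^{2t}.
-/

open Real

namespace Real

lemma convexOn_sinh : ConvexOn ℝ (Set.Ici 0) sinh :=
  MonotoneOn.convexOn_of_deriv (convex_Ici 0) continuous_sinh.continuousOn
    differentiable_sinh.differentiableOn (by
      rw [deriv_sinh, interior_Ici]
      exact cosh_strictMonoOn.monotoneOn.mono Set.Ioi_subset_Ici_self)

lemma sinh_mul_le_mul_sinh {q w : ℝ} (hq0 : 0 ≤ q) (hq1 : q ≤ 1) (hw : 0 ≤ w) :
    sinh (q * w) ≤ q * sinh w := by
  simpa using convexOn_sinh.2 Set.self_mem_Ici hw (sub_nonneg.2 hq1) hq0 (sub_add_cancel 1 q)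

lemma sinh_mul_sq_le {q : ℝ} (hq : |q| ≤ 1) (u : ℝ) : sinh (q * u) ^ 2 ≤ q ^ 2 * sinh u ^ 2 := by
  have h0 : 0 ≤ sinh (|q| * |u|) := sinh_nonneg_iff.2 (by positivity)
  calc sinh (q * u) ^ 2 = sinh (|q| * |u|) ^ 2 := by rw [← abs_mul, ← abs_sinh, sq_abs]
    _ ≤ (|q| * sinh |u|) ^ 2 :=
      pow_le_pow_left₀ h0 (sinh_mul_le_mul_sinh (abs_nonneg q) hq (abs_nonneg u)) 2
    _ = q ^ 2 * sinh u ^ 2 := by rw [mul_pow, sq_abs, ← abs_sinh, sq_abs]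

lemma sinh_add_mul_sinh_sub (a b : ℝ) :
    sinh (a + b) * sinh (a - b) = sinh a ^ 2 - sinh b ^ 2 := by
  rw [sinh_add, sinh_sub]
  linear_combination sinh a ^ 2 * cosh_sq b - sinh b ^ 2 * cosh_sq a

lemma four_mul_mul_sinh_sq_le {p : ℝ} (hp0 : 0 ≤ p) (hp1 : p ≤ 1) (u : ℝ) :
    4 * p * (1 - p) * sinh u ^ 2 ≤ sinh (2 * p * u) * sinh (2 * (1 - p) * u) := by
  have hq : |2 * p - 1| ≤ 1 := abs_le.2 ⟨by linarith, by linarith⟩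
  have h := sinh_add_mul_sinh_sub u ((2 * p - 1) * u)
  rw [show u + (2 * p - 1) * u = 2 * p * u by ring,
    show u - (2 * p - 1) * u = 2 * (1 - p) * u by ring] at h
  rw [h]
  linear_combination sinh_mul_sq_le hq u

lemma exp_two_mul_sub_one (t : ℝ) : exp (2 * t) - 1 = 2 * exp t * sinh t := by
  rw [sinh_eq, exp_neg, two_mul, exp_add]
  field_simp

lemma exp_two_mul_add_one (t : ℝ) : exp (2 * t) + 1 = 2 * exp t * cosh t := by
  rw [cosh_eq, exp_neg, two_mul, exp_add]
  field_simp

lemma one_le_sinh_div_self {t : ℝ} (ht : t ≠ 0) : 1 ≤ sinh t / t := by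
  rcases ht.lt_or_gt with ht | ht
  · rw [le_div_iff_of_neg ht, one_mul]
    exact sinh_le_self_iff.2 ht.le
  · rw [le_div_iff₀ ht, one_mul]
    exact self_le_sinh_iff.2 ht.le

lemma sqrt_le_sub_one_div_log {x : ℝ} (hx : 0 < x) (hx1 : x ≠ 1) : √x ≤ (x - 1) / log x := by
  obtain ⟨t, rfl⟩ : ∃ t, x = exp (2 * t) :=
    ⟨log x / 2, by rw [mul_div_cancel₀ _ two_ne_zero, exp_log hx]⟩
  have ht : t ≠ 0 := by rintro rfl; simp at hx1
  rw [← exp_half, exp_two_mul_sub_one, log_exp, mul_div_cancel_left₀ _ two_ne_zero,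
    mul_assoc, mul_div_mul_left _ _ two_ne_zero, mul_div_assoc]
  exact le_mul_of_one_le_right (exp_pos t).le (one_le_sinh_div_self ht)

end Real

lemma wyd_le_sq_sqrt_add_one_div_two {x p : ℝ} (hx : 0 < x) (hp0 : 0 ≤ p) (hp1 : p ≤ 1) :
    p * (1 - p) * (x - 1) ^ 2 / ((x ^ p - 1) * (x ^ (1 - p) - 1)) ≤ ((√x + 1) / 2) ^ 2 := by
  obtain ⟨u, rfl⟩ : ∃ u, x = exp (4 * u) :=
    ⟨log x / 4, by rw [mul_div_cancel₀ _ four_ne_zero, exp_log hx]⟩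
  have hpow (r : ℝ) : exp (4 * u) ^ r - 1 = 2 * exp (2 * r * u) * sinh (2 * r * u) := by
    rw [← exp_mul, ← exp_two_mul_sub_one]; ring_nf
  have hsub : exp (4 * u) - 1 = 4 * exp u ^ 2 * sinh u * cosh u := by
    rw [show 4 * u = 2 * (2 * u) by ring, exp_two_mul_sub_one, sinh_two_mul, two_mul u, exp_add]
    ring
  have hadd : √(exp (4 * u)) + 1 = 2 * exp u * cosh u := by
    rw [← exp_half, ← exp_two_mul_add_one]; ring_nf
  have hexp : exp (2 * p * u) * exp (2 * (1 - p) * u) = exp u ^ 2 := by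
    rw [← exp_add, sq, ← exp_add]; ring_nf
  have key := four_mul_mul_sinh_sq_le hp0 hp1 u
  have hD : 0 ≤ exp (2 * p * u) * exp (2 * (1 - p) * u) *
      (sinh (2 * p * u) * sinh (2 * (1 - p) * u)) :=
    mul_nonneg (by positivity) ((by positivity : 0 ≤ 4 * p * (1 - p) * sinh u ^ 2).trans key)
  rw [hpow, hpow, hsub, hadd]
  apply div_le_of_le_mul₀ (by linear_combination 4 * hD) (by positivity)
  linear_combination (4 * exp u ^ 4 * cosh u ^ 2) * key
    - (4 * exp u ^ 2 * cosh u ^ 2 * sinh (2 * p * u) * sinh (2 * (1 - p) * u)) * hexp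

theorem wyd_le_kantorovich_sqrt_log_mean (x p : ℝ) (hx : 0 < x) (hx1 : x ≠ 1)
    (hp0 : 0 < p) (hp1 : p < 1) :
    p * (1 - p) * (x - 1) ^ 2 / ((x ^ p - 1) * (x ^ (1 - p) - 1)) ≤
        ((Real.sqrt x + 1) / 2) ^ 2 ∧
      ((Real.sqrt x + 1) / 2) ^ 2 =
        ((Real.sqrt x + 1) ^ 2 / (4 * Real.sqrt x)) * Real.sqrt x ∧
      ((Real.sqrt x + 1) ^ 2 / (4 * Real.sqrt x)) * Real.sqrt x ≤
        ((Real.sqrt x + 1) ^ 2 / (4 * Real.sqrt x)) * ((x - 1) / Real.log x) := by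
  have hsqrt : 0 < √x := sqrt_pos.2 hx
  refine ⟨wyd_le_sq_sqrt_add_one_div_two hx hp0.le hp1.le, by field_simp; ring, ?_⟩
  exact mul_le_mul_of_nonneg_left (sqrt_le_sub_one_div_log hx hx1) (by positivity)
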